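/- arXiv:2108.05546 — 2 statements merged into one kernel-verified Lean document; each statement's English description precedes it below -/
import Mathlib

section
/- Let V be a finite-dimensional real vector space and let R be a finite set of nonzero vectors in V. Then R has exactly one independent decomposition that admits no proper independent refinement; i.e., there exists an independent decomposition F of R such that no independent decomposition properly refines F, and any two independent decompositions of R with this property are equal. This F is called the finest independent decomposition of R. -/
/-- A decomposition of a finite set `R` of vectors: a collection of nonempty,
pairwise disjoint subsets of `R` whose union is `R`. -/
def IsDecompositionOf {V : Type*} [DecidableEq V] (R : Finset V)
    (D : Finset (Finset V)) : Prop :=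
  (∀ P ∈ D, P.Nonempty) ∧ (D : Set (Finset V)).PairwiseDisjoint id ∧ D.sup id = R

/-- A decomposition is independent if the span of `R` is the internal direct sum of the
spans of the blocks. -/
def IsIndependentDecompositionOf {V : Type*} [DecidableEq V] [AddCommGroup V] [Module ℝ V]
    (R : Finset V) (D : Finset (Finset V)) : Prop :=
  IsDecompositionOf R D ∧
    iSupIndep (fun P : {P // P ∈ D} => Submodule.span ℝ ((P : Finset V) : Set V)) ∧
    (⨆ P : {P // P ∈ D}, Submodule.span ℝ ((P : Finset V) : Set V)) =
      Submodule.span ℝ (R : Set V)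

/-- `D` is a refinement of `P` (`P` a coarsening of `D`) if every block of `D` is contained
in some block of `P`. -/
def IsRefinementOf {V : Type*} (D P : Finset (Finset V)) : Prop :=
  ∀ Q ∈ D, ∃ B ∈ P, Q ⊆ B
/-!
Decompositions of `R` are the finite partitions of `R`, and refinement is their order. If `P`
and `Q` are independent, so is their common refinement `P ⊓ Q`: a block `B ∩ C` of it is
independent from the rest `(B \ C) ∪ (R \ B)` of `R`, because `B` is independent from `R \ B`
and `C` from `R \ C ⊇ B \ C`, and the modular law combines the two. The independent
partitions thus form a finite, nonempty (it contains `{R}`), inf-closed set, whose least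
element is the unique minimal one.
-/

open Finset Submodule

theorem InfClosed.exists_isLeast {α : Type*} [SemilatticeInf α] {s : Set α} (hs : InfClosed s)
    (hfin : s.Finite) (hne : s.Nonempty) : ∃ a, IsLeast s a := by
  have hne' : hfin.toFinset.Nonempty := hfin.toFinset_nonempty.2 hne
  refine ⟨hfin.toFinset.inf' hne' id, ?_, fun b hb => inf'_le id (hfin.mem_toFinset.2 hb)⟩
  exact hs.finsetInf'_mem hne' fun b hb => hfin.mem_toFinset.1 hb

theorem Submodule.span_coe_finsetSup {K M ι : Type*} [Semiring K] [AddCommMonoid M]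
    [Module K M] [DecidableEq M] (t : Finset ι) (f : ι → Finset M) :
    span K ((t.sup f : Finset M) : Set M) = t.sup fun i => span K (f i : Set M) :=
  apply_sup_eq_sup_comp (fun u : Finset M => span K (u : Set M))
    (fun u v => by rw [sup_eq_union, coe_union, span_union])
    (by rw [bot_eq_empty, coe_empty, span_empty])

namespace Finpartition

theorem sup_parts_erase {α : Type*} [DecidableEq α] {s : Finset α} (P : Finpartition s)
    {b : Finset α} (hb : b ∈ P.parts) :
    (P.parts.erase b).sup id = s \ b := by
  ext x
  simp only [Finset.mem_sup, mem_erase, id, mem_sdiff]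
  constructor
  · rintro ⟨c, ⟨hcb, hc⟩, hxc⟩
    exact ⟨P.subset hc hxc, fun hxb => hcb (P.eq_of_mem_parts hc hb hxc hxb)⟩
  · rintro ⟨hxs, hxb⟩
    obtain ⟨c, hc, hxc⟩ := P.exists_mem hxs
    exact ⟨c, ⟨fun hcb => hxb (hcb ▸ hxc), hc⟩, hxc⟩

variable {K M : Type*} [Ring K] [AddCommGroup M] [Module K M] [DecidableEq M] {s : Finset M}

theorem supIndep_span_iff (P : Finpartition s) :
    P.parts.SupIndep (fun b => span K (b : Set M)) ↔
      ∀ b ∈ P.parts, Disjoint (span K (b : Set M)) (span K ((s \ b : Finset M) : Set M)) := by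
  rw [supIndep_iff_disjoint_erase]
  refine forall₂_congr fun b hb => ?_
  rw [← P.sup_parts_erase hb, span_coe_finsetSup]
  rfl

theorem supIndep_span_top : (⊤ : Finpartition s).parts.SupIndep fun b => span K (b : Set M) :=
  (supIndep_singleton _ _).subset (parts_top_subset s)

theorem supIndep_span_inf {P Q : Finpartition s}
    (hP : P.parts.SupIndep fun b => span K (b : Set M))
    (hQ : Q.parts.SupIndep fun b => span K (b : Set M)) :
    (P ⊓ Q).parts.SupIndep fun b => span K (b : Set M) := by
  rw [supIndep_span_iff] at hP hQ ⊢
  intro b hb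
  obtain ⟨⟨B, C⟩, hBC, rfl⟩ := mem_image.1 (mem_of_mem_erase hb)
  obtain ⟨hB, hC⟩ : B ∈ P.parts ∧ C ∈ Q.parts := mem_product.1 hBC
  rw [inf_eq_inter]
  have hBs : B ⊆ s := P.subset hB
  have hrest : s \ (B ∩ C) = B \ C ∪ s \ B := by
    ext x
    simp only [mem_sdiff, mem_inter, mem_union]
    have := @hBs x
    tauto
  rw [hrest, coe_union, span_union]
  refine Disjoint.disjoint_sup_right_of_disjoint_sup_left ?_ ?_
  · exact (hQ C hC).mono (span_mono (coe_subset.2 inter_subset_right))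
      (span_mono (coe_subset.2 (sdiff_subset_sdiff hBs le_rfl)))
  · exact (hP B hB).mono_left (sup_le (span_mono (coe_subset.2 inter_subset_left))
      (span_mono (coe_subset.2 sdiff_subset)))

variable (K) in
theorem exists_isLeast_supIndep_span (s : Finset M) :
    ∃ F : Finpartition s, IsLeast {P | P.parts.SupIndep fun b => span K (b : Set M)} F :=
  InfClosed.exists_isLeast (fun _ hP _ hQ => supIndep_span_inf hP hQ) (Set.toFinite _)
    ⟨⊤, supIndep_span_top⟩

end Finpartition

section Decomposition

variable {V : Type*} [DecidableEq V] {R : Finset V}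

theorem Finpartition.isDecompositionOf_parts (P : Finpartition R) : IsDecompositionOf R P.parts :=
  ⟨fun _ => P.nonempty_of_mem_parts, P.disjoint, P.sup_parts⟩

theorem IsDecompositionOf.exists_finpartition {D : Finset (Finset V)}
    (hD : IsDecompositionOf R D) : ∃ P : Finpartition R, P.parts = D :=
  ⟨⟨D, supIndep_iff_pairwiseDisjoint.2 hD.2.1, hD.2.2, fun h => (hD.1 ∅ h).ne_empty rfl⟩,
    rfl⟩

theorem Finpartition.isIndependentDecompositionOf_parts_iff [AddCommGroup V] [Module ℝ V]
    (P : Finpartition R) :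
    IsIndependentDecompositionOf R P.parts ↔ P.parts.SupIndep fun b => span ℝ (b : Set V) := by
  refine ⟨fun h => iSupIndep_comp_coe_iff_supIndep.1 h.2.1,
    fun h => ⟨P.isDecompositionOf_parts, iSupIndep_comp_coe_iff_supIndep.2 h, ?_⟩⟩
  conv_rhs => rw [← P.sup_parts, span_coe_finsetSup, Finset.sup_eq_iSup, iSup_subtype']
  rfl

end Decomposition

theorem existsUnique_finest_independent_decomposition_general
    {V : Type*} [DecidableEq V] [AddCommGroup V] [Module ℝ V]
    (R : Finset V) :
    ∃! F : Finset (Finset V), IsIndependentDecompositionOf R F ∧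
      ¬ ∃ D : Finset (Finset V), IsIndependentDecompositionOf R D ∧
        IsRefinementOf D F ∧ D ≠ F := by
  obtain ⟨F, hF, hF_le⟩ := Finpartition.exists_isLeast_supIndep_span ℝ R
  have hF : IsIndependentDecompositionOf R F.parts :=
    F.isIndependentDecompositionOf_parts_iff.2 hF
  refine ⟨F.parts, ⟨hF, ?_⟩, ?_⟩
  · rintro ⟨D, hD, hDF, hne⟩
    obtain ⟨P, rfl⟩ := hD.1.exists_finpartition
    have hFP : F ≤ P := hF_le (P.isIndependentDecompositionOf_parts_iff.1 hD)
    exact hne (congrArg Finpartition.parts (le_antisymm hDF hFP))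
  · rintro D ⟨hD, hD_min⟩
    obtain ⟨P, rfl⟩ := hD.1.exists_finpartition
    by_contra hne
    have hFP : F ≤ P := hF_le (P.isIndependentDecompositionOf_parts_iff.1 hD)
    exact hD_min ⟨F.parts, hF, hFP, Ne.symm hne⟩

/-- `R` has exactly one independent decomposition admitting no proper independent
refinement: the finest independent decomposition of `R`. -/
theorem existsUnique_finest_independent_decomposition
    {V : Type*} [DecidableEq V] [AddCommGroup V] [Module ℝ V] [FiniteDimensional ℝ V]
    (R : Finset V) (hR : ∀ v ∈ R, v ≠ 0) :
    ∃! F : Finset (Finset V), IsIndependentDecompositionOf R F ∧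
      ¬ ∃ D : Finset (Finset V), IsIndependentDecompositionOf R D ∧
        IsRefinementOf D F ∧ D ≠ F :=
  existsUnique_finest_independent_decomposition_general R
end

section
/- Let V be a finite-dimensional real vector space, let R be a finite set of nonzero vectors in V, and fix a subset B of R that is a basis of span(R). For each connected component c of the coordinate graph of R with respect to B, let N_c be the set of all vectors v ∈ R whose coordinate vector with respect to the basis B has support contained in the vertex set of c. Then the collection {N_c : c a connected component of the coordinate graph} is a decomposition of R, it is independent, and it admits no proper independent refinement; i.e., it is the finest independent decomposition of R. -/
/-- The coordinate graph of `R` with respect to a subset `B` of `R` that is a basis of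
`span R`: vertices are the elements of `B`, and two distinct basis vectors are adjacent
iff some vector of `R \ B` has nonzero coefficients at both of them in its (unique)
expansion over the basis `B`. -/
def coordGraph {V : Type*} [AddCommGroup V] [Module ℝ V] (R B : Finset V) :
    SimpleGraph {x // x ∈ B} where
  Adj b₁ b₂ := b₁ ≠ b₂ ∧ ∃ v ∈ R, v ∉ B ∧ ∃ a : {x // x ∈ B} → ℝ,
    v = ∑ t : {x // x ∈ B}, a t • (t : V) ∧ a b₁ ≠ 0 ∧ a b₂ ≠ 0
  symm := ⟨by
    rintro b₁ b₂ ⟨hne, v, hvR, hvB, a, hsum, h1, h2⟩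
    exact ⟨hne.symm, v, hvR, hvB, a, hsum, h2, h1⟩⟩
  loopless := ⟨by rintro b ⟨hne, -⟩; exact hne rfl⟩

/-- For a connected component `c` of the coordinate graph, the block `N_c` consisting of
all vectors of `R` whose coordinate vector with respect to the basis `B` has support
contained in the vertex set of `c`. -/
noncomputable def componentBlock {V : Type*} [AddCommGroup V] [Module ℝ V] (R B : Finset V)
    (c : (coordGraph R B).ConnectedComponent) : Finset V := by
  classical
  exact R.filter (fun v => ∃ a : {x // x ∈ B} → ℝ,
    v = ∑ t : {x // x ∈ B}, a t • (t : V) ∧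
      ∀ t, a t ≠ 0 → (coordGraph R B).connectedComponentMk t = c)

/-!
Every vector of `R` has its coordinate support over `B` inside one connected component of the
coordinate graph, so the blocks `N_c` partition `R`, and `span N_c` is spanned by the basis vectors
of `c`; independence is inherited from the linear independence of `B`.

Conversely, in any independent decomposition the block containing `v` contains every basis vector
in the support of `v`: the rest of the expansion of `v` lies both in the span of that block and in
the span of the other blocks, hence vanishes. So both ends of an edge, hence a whole component `c`
and with it `N_c`, lie in one block, and a refinement of `{N_c}` must have every `N_c` as a block.
-/

open Submodule

theorem iSupIndep.subtype_of_coe_eq_range {α β ι : Type*} [CompleteLattice α] {f : β → α}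
    {g : ι → β} {s : Finset β} (hs : (s : Set β) = Set.range g) (h : iSupIndep fun i => f (g i)) :
    iSupIndep fun P : s => f P := by
  have hsection : ∀ P : s, ∃ i, g i = P := fun P => by
    have hP : (P : β) ∈ (s : Set β) := P.2
    rwa [hs] at hP
  choose e he using hsection
  have he_inj : Function.Injective e := fun P Q hPQ =>
    Subtype.ext (by rw [← he P, ← he Q, hPQ])
  convert h.comp he_inj with P
  simp [he]

theorem iSup_subtype_of_coe_eq_range {α β ι : Type*} [CompleteLattice α] {f : β → α}
    {g : ι → β} {s : Finset β} (hs : (s : Set β) = Set.range g) :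
    ⨆ P : s, f P = ⨆ i, f (g i) := by
  rw [← iSup_range (f := g), ← hs]
  exact (iSup_subtype' (f := fun P _ => f P)).symm

theorem LinearIndependent.iSupIndep_span_image_fiber {R M ι κ : Type*} [Ring R]
    [AddCommGroup M] [Module R M] {v : ι → M} (hv : LinearIndependent R v) (π : ι → κ) :
    iSupIndep fun k => span R (v '' (π ⁻¹' {k})) := by
  refine iSupIndep_def.mpr fun k => (hv.disjoint_span_image disjoint_compl_right).mono_right ?_
  refine iSup₂_le fun j hj => span_mono (Set.image_mono fun t ht => ?_)
  simp_all

section Decomposition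

variable {V : Type*} [DecidableEq V] {R : Finset V} {D F : Finset (Finset V)}

theorem IsDecompositionOf.subset (hD : IsDecompositionOf R D) {Q : Finset V} (hQ : Q ∈ D) :
    Q ⊆ R :=
  hD.2.2 ▸ Finset.le_sup (f := id) hQ

theorem IsDecompositionOf.exists_mem (hD : IsDecompositionOf R D) {v : V} (hv : v ∈ R) :
    ∃ Q ∈ D, v ∈ Q := by
  rw [← hD.2.2] at hv
  simpa using Finset.mem_sup.mp hv

theorem IsDecompositionOf.eq_of_mem_of_mem (hD : IsDecompositionOf R D) {Q Q' : Finset V}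
    (hQ : Q ∈ D) (hQ' : Q' ∈ D) {v : V} (hvQ : v ∈ Q) (hvQ' : v ∈ Q') : Q = Q' := by
  by_contra hne
  exact Finset.disjoint_left.mp (hD.2.1 hQ hQ' hne) hvQ hvQ'

theorem IsDecompositionOf.eq_of_subset (hD : IsDecompositionOf R D)
    (hF : IsDecompositionOf R F) (hDF : D ⊆ F) : D = F := by
  refine Finset.Subset.antisymm hDF fun P hP => ?_
  obtain ⟨v, hvP⟩ := hF.1 P hP
  have hvR : v ∈ R := hF.subset hP hvP
  obtain ⟨Q, hQ, hvQ⟩ := hD.exists_mem hvR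
  rwa [hF.eq_of_mem_of_mem hP (hDF hQ) hvP hvQ]

variable [AddCommGroup V] [Module ℝ V]

theorem IsIndependentDecompositionOf.disjoint_span_sdiff (hD : IsIndependentDecompositionOf R D)
    {Q : Finset V} (hQ : Q ∈ D) :
    Disjoint (span ℝ (Q : Set V)) (span ℝ ((R \ Q : Finset V) : Set V)) := by
  refine (iSupIndep_def.mp hD.2.1 ⟨Q, hQ⟩).mono_right (span_le.mpr fun r hr => ?_)
  obtain ⟨hrR, hrQ⟩ := Finset.mem_sdiff.mp hr
  obtain ⟨Q', hQ', hrQ'⟩ := hD.1.exists_mem hrR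
  have hne : (⟨Q', hQ'⟩ : D) ≠ ⟨Q, hQ⟩ := by
    rintro ⟨⟩
    exact hrQ hrQ'
  exact mem_iSup_of_mem ⟨Q', hQ'⟩ (mem_iSup_of_mem hne (subset_span hrQ'))

end Decomposition

section Coordinates

variable {V : Type*} [AddCommGroup V] [Module ℝ V] {B : Finset V}

/-- Coordinates of `v` over `B`: junk unless `v ∈ span B`, and well defined only when `B` is
linearly independent. -/
noncomputable def coords (B : Finset V) (v : V) : B → ℝ :=
  open Classical in
  if h : ∃ a : B → ℝ, v = ∑ t, a t • (t : V) then h.choose else 0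

theorem sum_coords_smul {v : V} (hv : v ∈ span ℝ (B : Set V)) :
    ∑ t, coords B v t • (t : V) = v := by
  have h : ∃ a : B → ℝ, v = ∑ t, a t • (t : V) := by
    obtain ⟨f, -, hf⟩ := mem_span_finset.mp hv
    exact ⟨fun t => f t, by rw [← hf, ← Finset.sum_attach B, Finset.univ_eq_attach]⟩
  rw [coords, dif_pos h]
  exact h.choose_spec.symm

theorem coords_eq_of_eq_sum (hBli : LinearIndependent ℝ ((↑) : B → V)) {v : V} {a : B → ℝ}
    (ha : v = ∑ t, a t • (t : V)) : coords B v = a := by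
  have hv : v ∈ span ℝ (B : Set V) :=
    ha ▸ sum_mem fun t _ => smul_mem _ _ (subset_span t.2)
  apply hBli.fintypeLinearCombination_injective
  simp only [Fintype.linearCombination_apply, sum_coords_smul hv, ← ha]

theorem coords_coe_ne_zero_iff (hBli : LinearIndependent ℝ ((↑) : B → V)) {t₀ t : B} :
    coords B (t₀ : V) t ≠ 0 ↔ t = t₀ := by
  classical
  rw [coords_eq_of_eq_sum hBli (a := Pi.single t₀ 1) (by simp [Pi.single_apply])]
  simp [Pi.single_apply]

theorem exists_coords_ne_zero {v : V} (hv : v ∈ span ℝ (B : Set V)) (hv0 : v ≠ 0) :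
    ∃ t, coords B v t ≠ 0 := by
  by_contra! h
  rw [← sum_coords_smul hv] at hv0
  simp [h] at hv0

end Coordinates

namespace coordGraph

variable {V : Type*} [AddCommGroup V] [Module ℝ V] {R B : Finset V}

theorem connectedComponentMk_eq_of_coords_ne_zero (hBli : LinearIndependent ℝ ((↑) : B → V))
    (hBspan : span ℝ (B : Set V) = span ℝ (R : Set V)) {v : V} (hv : v ∈ R) {t₁ t₂ : B}
    (h₁ : coords B v t₁ ≠ 0) (h₂ : coords B v t₂ ≠ 0) :
    (coordGraph R B).connectedComponentMk t₁ = (coordGraph R B).connectedComponentMk t₂ := by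
  by_cases hvB : v ∈ B
  · have e₁ := (coords_coe_ne_zero_iff hBli (t₀ := ⟨v, hvB⟩)).mp h₁
    have e₂ := (coords_coe_ne_zero_iff hBli (t₀ := ⟨v, hvB⟩)).mp h₂
    rw [e₁, e₂]
  by_cases h₁₂ : t₁ = t₂
  · rw [h₁₂]
  exact SimpleGraph.ConnectedComponent.sound (SimpleGraph.Adj.reachable
    ⟨h₁₂, v, hv, hvB, coords B v, (sum_coords_smul (hBspan ▸ subset_span hv)).symm, h₁, h₂⟩)

end coordGraph

section ComponentBlocks

variable {V : Type*} [AddCommGroup V] [Module ℝ V] {R B : Finset V}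

theorem componentBlock_subset (c : (coordGraph R B).ConnectedComponent) :
    componentBlock R B c ⊆ R := by
  classical
  exact Finset.filter_subset _ _

theorem mem_componentBlock_iff (hBli : LinearIndependent ℝ ((↑) : B → V))
    (hBspan : span ℝ (B : Set V) = span ℝ (R : Set V)) {v : V} (hv : v ∈ R)
    {c : (coordGraph R B).ConnectedComponent} :
    v ∈ componentBlock R B c ↔
      ∀ t, coords B v t ≠ 0 → (coordGraph R B).connectedComponentMk t = c := by
  simp only [componentBlock, Finset.mem_filter, hv, true_and]
  constructor
  · rintro ⟨a, hsum, hc⟩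
    rwa [coords_eq_of_eq_sum hBli hsum]
  · exact fun hc => ⟨coords B v, (sum_coords_smul (hBspan ▸ subset_span hv)).symm, hc⟩

theorem mem_componentBlock_connectedComponentMk (hBli : LinearIndependent ℝ ((↑) : B → V))
    (hBspan : span ℝ (B : Set V) = span ℝ (R : Set V)) {v : V} (hv : v ∈ R) {t : B}
    (ht : coords B v t ≠ 0) : v ∈ componentBlock R B ((coordGraph R B).connectedComponentMk t) :=
  (mem_componentBlock_iff hBli hBspan hv).mpr fun _ ht' =>
    coordGraph.connectedComponentMk_eq_of_coords_ne_zero hBli hBspan hv ht' ht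

theorem coe_mem_componentBlock (hBR : B ⊆ R) (hBli : LinearIndependent ℝ ((↑) : B → V))
    (hBspan : span ℝ (B : Set V) = span ℝ (R : Set V)) (t : B) :
    (t : V) ∈ componentBlock R B ((coordGraph R B).connectedComponentMk t) :=
  mem_componentBlock_connectedComponentMk hBli hBspan (hBR t.2)
    ((coords_coe_ne_zero_iff hBli).mpr rfl)

theorem span_componentBlock (hBR : B ⊆ R) (hBli : LinearIndependent ℝ ((↑) : B → V))
    (hBspan : span ℝ (B : Set V) = span ℝ (R : Set V))
    (c : (coordGraph R B).ConnectedComponent) :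
    span ℝ (componentBlock R B c : Set V) =
      span ℝ (((↑) : B → V) '' ((coordGraph R B).connectedComponentMk ⁻¹' {c})) := by
  apply le_antisymm
  · refine span_le.mpr fun v hvc => ?_
    have hv : v ∈ R := componentBlock_subset c hvc
    have hvB : v ∈ span ℝ (B : Set V) := hBspan ▸ subset_span hv
    rw [SetLike.mem_coe, ← sum_coords_smul hvB]
    refine sum_mem fun t _ => ?_
    by_cases ht : coords B v t = 0
    · simp [ht]
    · exact smul_mem _ _ (subset_span
        ⟨t, (mem_componentBlock_iff hBli hBspan hv).mp hvc t ht, rfl⟩)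
  · refine span_le.mpr ?_
    rintro - ⟨t, rfl, rfl⟩
    exact subset_span (coe_mem_componentBlock hBR hBli hBspan t)

theorem iSupIndep_span_componentBlock (hBR : B ⊆ R) (hBli : LinearIndependent ℝ ((↑) : B → V))
    (hBspan : span ℝ (B : Set V) = span ℝ (R : Set V)) :
    iSupIndep fun c => span ℝ (componentBlock R B c : Set V) := by
  simp only [span_componentBlock hBR hBli hBspan]
  exact hBli.iSupIndep_span_image_fiber _

theorem iSup_span_componentBlock (hBR : B ⊆ R) (hBli : LinearIndependent ℝ ((↑) : B → V))
    (hBspan : span ℝ (B : Set V) = span ℝ (R : Set V)) :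
    ⨆ c, span ℝ (componentBlock R B c : Set V) = span ℝ (R : Set V) := by
  refine le_antisymm (iSup_le fun c => span_mono (Finset.coe_subset.mpr
    (componentBlock_subset c))) ?_
  rw [← hBspan, span_le]
  intro b hb
  exact mem_iSup_of_mem _ (subset_span (coe_mem_componentBlock hBR hBli hBspan ⟨b, hb⟩))

variable [DecidableEq V] {F : Finset (Finset V)}

theorem isDecompositionOf_componentBlocks (hR : ∀ v ∈ R, v ≠ 0) (hBR : B ⊆ R)
    (hBli : LinearIndependent ℝ ((↑) : B → V)) (hBspan : span ℝ (B : Set V) = span ℝ (R : Set V))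
    (hF : (F : Set (Finset V)) = Set.range (componentBlock R B)) :
    IsDecompositionOf R F := by
  have hmem : ∀ {P}, P ∈ F ↔ ∃ c, componentBlock R B c = P := fun {P} => by
    rw [← Finset.mem_coe, hF, Set.mem_range]
  refine ⟨?_, ?_, ?_⟩
  · rintro P hP
    obtain ⟨c, rfl⟩ := hmem.mp hP
    obtain ⟨t, rfl⟩ := c.exists_rep
    exact ⟨t, coe_mem_componentBlock hBR hBli hBspan t⟩
  · rintro P hP P' hP' hne
    obtain ⟨c, rfl⟩ := hmem.mp hP
    obtain ⟨c', rfl⟩ := hmem.mp hP'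
    refine Finset.disjoint_left.mpr fun v hvc hvc' => hne ?_
    have hvR := componentBlock_subset c hvc
    obtain ⟨t, ht⟩ := exists_coords_ne_zero (hBspan ▸ subset_span hvR) (hR v hvR)
    rw [← (mem_componentBlock_iff hBli hBspan hvR).mp hvc t ht,
      (mem_componentBlock_iff hBli hBspan hvR).mp hvc' t ht]
  · refine le_antisymm (Finset.sup_le fun P hP => ?_) fun v hv => ?_
    · obtain ⟨c, rfl⟩ := hmem.mp hP
      exact componentBlock_subset c
    · obtain ⟨t, ht⟩ := exists_coords_ne_zero (hBspan ▸ subset_span hv) (hR v hv)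
      exact Finset.le_sup (f := id) (hmem.mpr ⟨_, rfl⟩)
        (mem_componentBlock_connectedComponentMk hBli hBspan hv ht)

theorem isIndependentDecompositionOf_componentBlocks (hR : ∀ v ∈ R, v ≠ 0) (hBR : B ⊆ R)
    (hBli : LinearIndependent ℝ ((↑) : B → V)) (hBspan : span ℝ (B : Set V) = span ℝ (R : Set V))
    (hF : (F : Set (Finset V)) = Set.range (componentBlock R B)) :
    IsIndependentDecompositionOf R F :=
  ⟨isDecompositionOf_componentBlocks hR hBR hBli hBspan hF,
    iSupIndep.subtype_of_coe_eq_range (f := fun P : Finset V => span ℝ (P : Set V)) hF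
      (iSupIndep_span_componentBlock hBR hBli hBspan),
    (iSup_subtype_of_coe_eq_range (f := fun P : Finset V => span ℝ (P : Set V)) hF).trans
      (iSup_span_componentBlock hBR hBli hBspan)⟩

end ComponentBlocks

namespace IsIndependentDecompositionOf

variable {V : Type*} [DecidableEq V] [AddCommGroup V] [Module ℝ V] {R B : Finset V}
  {D : Finset (Finset V)} {Q : Finset V}

theorem coe_mem_of_coords_ne_zero (hD : IsIndependentDecompositionOf R D) (hBR : B ⊆ R)
    (hBli : LinearIndependent ℝ ((↑) : B → V)) (hBspan : span ℝ (B : Set V) = span ℝ (R : Set V))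
    (hQ : Q ∈ D) {v : V} (hvQ : v ∈ Q) {t : B} (ht : coords B v t ≠ 0) : (t : V) ∈ Q := by
  by_contra htQ
  set T : Finset B := Finset.univ.filter fun s => (s : V) ∈ Q
  have hvB : v ∈ span ℝ (B : Set V) := hBspan ▸ subset_span (hD.1.subset hQ hvQ)
  set w := ∑ s ∈ Tᶜ, coords B v s • (s : V)
  have hw_out : w ∈ span ℝ ((R \ Q : Finset V) : Set V) :=
    sum_mem fun s hs => smul_mem _ _ (subset_span (Finset.mem_sdiff.mpr
      ⟨hBR s.2, by simpa [T] using hs⟩))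
  have hw_in : w ∈ span ℝ (Q : Set V) := by
    have hsplit : w = v - ∑ s ∈ T, coords B v s • (s : V) :=
      eq_sub_of_add_eq' (by rw [Finset.sum_add_sum_compl, sum_coords_smul hvB])
    rw [hsplit]
    refine sub_mem (subset_span hvQ) (sum_mem fun s hs => smul_mem _ _ (subset_span ?_))
    simpa [T] using hs
  have hw : w = 0 := disjoint_def.mp (hD.disjoint_span_sdiff hQ) w hw_in hw_out
  exact ht (linearIndependent_iff'.mp hBli Tᶜ _ hw t (by simpa [T] using htQ))

theorem mem_of_connectedComponentMk_eq (hD : IsIndependentDecompositionOf R D) (hBR : B ⊆ R)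
    (hBli : LinearIndependent ℝ ((↑) : B → V)) (hBspan : span ℝ (B : Set V) = span ℝ (R : Set V))
    (hQ : Q ∈ D) {t₁ t₂ : B} (h₁ : (t₁ : V) ∈ Q)
    (h : (coordGraph R B).connectedComponentMk t₁ = (coordGraph R B).connectedComponentMk t₂) :
    (t₂ : V) ∈ Q := by
  obtain ⟨p⟩ := SimpleGraph.ConnectedComponent.exact h
  clear h
  induction p with
  | nil => exact h₁
  | cons hadj _ ih =>
    obtain ⟨-, v, hvR, -, a, hsum, ha₁, ha₂⟩ := hadj
    rw [← coords_eq_of_eq_sum hBli hsum] at ha₁ ha₂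
    obtain ⟨Q', hQ', hvQ'⟩ := hD.1.exists_mem hvR
    obtain rfl := hD.1.eq_of_mem_of_mem hQ' hQ
      (hD.coe_mem_of_coords_ne_zero hBR hBli hBspan hQ' hvQ' ha₁) h₁
    exact ih (hD.coe_mem_of_coords_ne_zero hBR hBli hBspan hQ' hvQ' ha₂)

theorem componentBlock_subset_of_coe_mem (hD : IsIndependentDecompositionOf R D)
    (hR : ∀ v ∈ R, v ≠ 0) (hBR : B ⊆ R) (hBli : LinearIndependent ℝ ((↑) : B → V))
    (hBspan : span ℝ (B : Set V) = span ℝ (R : Set V)) (hQ : Q ∈ D) {t : B} (ht : (t : V) ∈ Q) :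
    componentBlock R B ((coordGraph R B).connectedComponentMk t) ⊆ Q := by
  intro v hvc
  have hvR := componentBlock_subset _ hvc
  obtain ⟨s, hs⟩ := exists_coords_ne_zero (hBspan ▸ subset_span hvR) (hR v hvR)
  obtain ⟨Q', hQ', hvQ'⟩ := hD.1.exists_mem hvR
  have hsQ := hD.mem_of_connectedComponentMk_eq hBR hBli hBspan hQ ht
    ((mem_componentBlock_iff hBli hBspan hvR).mp hvc s hs).symm
  rwa [hD.1.eq_of_mem_of_mem hQ hQ' hsQ
    (hD.coe_mem_of_coords_ne_zero hBR hBli hBspan hQ' hvQ' hs)]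

theorem eq_of_isRefinementOf_componentBlocks (hD : IsIndependentDecompositionOf R D)
    (hR : ∀ v ∈ R, v ≠ 0) (hBR : B ⊆ R) (hBli : LinearIndependent ℝ ((↑) : B → V))
    (hBspan : span ℝ (B : Set V) = span ℝ (R : Set V)) {F : Finset (Finset V)}
    (hF : (F : Set (Finset V)) = Set.range (componentBlock R B)) (hDF : IsRefinementOf D F) :
    D = F := by
  refine hD.1.eq_of_subset (isDecompositionOf_componentBlocks hR hBR hBli hBspan hF)
    fun Q hQ => ?_
  obtain ⟨P, hPF, hQP⟩ := hDF Q hQ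
  obtain ⟨c, rfl⟩ : P ∈ Set.range (componentBlock R B) := hF ▸ hPF
  obtain ⟨v, hvQ⟩ := hD.1.1 Q hQ
  have hvR : v ∈ R := componentBlock_subset c (hQP hvQ)
  obtain ⟨t, ht⟩ := exists_coords_ne_zero (hBspan ▸ subset_span hvR) (hR v hvR)
  have hcQ := hD.componentBlock_subset_of_coe_mem hR hBR hBli hBspan hQ
    (hD.coe_mem_of_coords_ne_zero hBR hBli hBspan hQ hvQ ht)
  rw [(mem_componentBlock_iff hBli hBspan hvR).mp (hQP hvQ) t ht] at hcQ
  rwa [Finset.Subset.antisymm hQP hcQ]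

end IsIndependentDecompositionOf

theorem componentBlocks_finest_independent_decomposition_general
    {V : Type*} [DecidableEq V] [AddCommGroup V] [Module ℝ V]
    (R B : Finset V) (hR : ∀ v ∈ R, v ≠ 0) (hBR : B ⊆ R)
    (hBli : LinearIndependent ℝ ((↑) : {x // x ∈ B} → V))
    (hBspan : Submodule.span ℝ (B : Set V) = Submodule.span ℝ (R : Set V))
    (F : Finset (Finset V))
    (hF : (F : Set (Finset V)) = Set.range (componentBlock R B)) :
    IsIndependentDecompositionOf R F ∧
      ¬ ∃ D : Finset (Finset V), IsIndependentDecompositionOf R D ∧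
        IsRefinementOf D F ∧ D ≠ F :=
  ⟨isIndependentDecompositionOf_componentBlocks hR hBR hBli hBspan hF,
    fun ⟨_, hD, hDF, hne⟩ =>
      hne (hD.eq_of_isRefinementOf_componentBlocks hR hBR hBli hBspan hF hDF)⟩

/-- The collection `{N_c : c a connected component of the coordinate graph}` is the finest
independent decomposition of `R`: it is an independent decomposition of `R` admitting
no proper independent refinement. -/
theorem componentBlocks_finest_independent_decomposition
    {V : Type*} [DecidableEq V] [AddCommGroup V] [Module ℝ V] [FiniteDimensional ℝ V]
    (R B : Finset V) (hR : ∀ v ∈ R, v ≠ 0) (hBR : B ⊆ R)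
    (hBli : LinearIndependent ℝ ((↑) : {x // x ∈ B} → V))
    (hBspan : Submodule.span ℝ (B : Set V) = Submodule.span ℝ (R : Set V))
    (F : Finset (Finset V))
    (hF : (F : Set (Finset V)) = Set.range (componentBlock R B)) :
    IsIndependentDecompositionOf R F ∧
      ¬ ∃ D : Finset (Finset V), IsIndependentDecompositionOf R D ∧
        IsRefinementOf D F ∧ D ≠ F :=
  componentBlocks_finest_independent_decomposition_general R B hR hBR hBli hBspan F hF
end
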